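/- arXiv:2101.05915 — 2 statements merged into one kernel-verified Lean document; each statement's English description precedes it below -/
import Mathlib

section
/- Define the conjugate exponent r'(x) = r(x)/(r(x) − 1), so that 1/r(x) + 1/r'(x) = 1 for all x ∈ Ω, and set r'₋ = r₊/(r₊ − 1). Let u, v : Ω → ℝ be measurable with ρ_{r(·)}(u) < ∞ and ρ_{r'(·)}(v) < ∞. Then ∫_Ω |u(x) v(x)| dμ(x) ≤ (1/r₋ + 1/r'₋) · ‖u‖_{r(·)} · ‖v‖_{r'(·)}. -/
open MeasureTheory Filter Topology ENNReal

/-- The modular `ρ_{r(·)}(u) = ∫_Ω |u(x)|^{r(x)} dμ(x)` of a variable-exponent Lebesgue space. -/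
noncomputable def vmodular {Ω : Type*} [MeasurableSpace Ω] (μ : Measure Ω)
    (r : Ω → ℝ) (u : Ω → ℝ) : ℝ≥0∞ :=
  ∫⁻ x, ENNReal.ofReal (|u x| ^ (r x)) ∂μ

/-- The Luxemburg norm `‖u‖_{r(·)} = inf { λ > 0 : ρ_{r(·)}(u/λ) ≤ 1 }`. -/
noncomputable def luxNorm {Ω : Type*} [MeasurableSpace Ω] (μ : Measure Ω)
    (r : Ω → ℝ) (u : Ω → ℝ) : ℝ :=
  sInf {lam : ℝ | 0 < lam ∧ vmodular μ r (fun x => u x / lam) ≤ 1}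

/-!
For admissible scalings `λ, m > 0`, i.e. `ρ_{r(·)}(u/λ) ≤ 1` and `ρ_{r'(·)}(v/m) ≤ 1`, apply
Young's inequality pointwise to `|u|/λ` and `|v|/m`. Since `r(x) ∈ [r₋, r₊]`, its weights
`1/r(x)` and `1/r'(x)` are at most `1/r₋` and `1/r'₋`, so integrating gives
`∫ |uv| ≤ (1/r₋ + 1/r'₋) λ m`; taking the infimum over `λ` and then over `m` gives the claim.
-/

lemma Real.young_inequality_of_exponent_mem_Icc {p rm rp a b : ℝ} (hrm : 1 < rm)
    (hp : p ∈ Set.Icc rm rp) (ha : 0 ≤ a) (hb : 0 ≤ b) :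
    a * b ≤ rm⁻¹ * a ^ p + rp.conjExponent⁻¹ * b ^ p.conjExponent := by
  have hpq := Real.HolderConjugate.conjExponent (hrm.trans_le hp.1)
  have hrp := Real.HolderConjugate.conjExponent (hpq.lt.trans_le hp.2)
  have hp_inv : p⁻¹ ≤ rm⁻¹ := inv_anti₀ (by linarith) hp.1
  have hq_inv : p.conjExponent⁻¹ ≤ rp.conjExponent⁻¹ := by
    rw [← hpq.one_sub_inv, ← hrp.one_sub_inv]
    linarith [inv_anti₀ hpq.pos hp.2]
  calc a * b ≤ a ^ p / p + b ^ p.conjExponent / p.conjExponent :=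
        Real.young_inequality_of_nonneg ha hb hpq
    _ = p⁻¹ * a ^ p + p.conjExponent⁻¹ * b ^ p.conjExponent := by ring
    _ ≤ rm⁻¹ * a ^ p + rp.conjExponent⁻¹ * b ^ p.conjExponent := by gcongr

lemma Real.le_mul_csInf {c t : ℝ} {S : Set ℝ} (hc : 0 ≤ c) (hS : S.Nonempty)
    (h : ∀ a ∈ S, t ≤ c * a) : t ≤ c * sInf S := by
  rw [← smul_eq_mul, ← Real.sInf_smul_of_nonneg hc]
  refine le_csInf hS.smul_set ?_
  rintro _ ⟨a, ha, rfl⟩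
  exact h a ha

section Modular

variable {Ω : Type*} [MeasurableSpace Ω] {μ : Measure Ω} {s p q : Ω → ℝ} {u v w : Ω → ℝ}

lemma vmodular_div_le (hs : ∀ x, 1 ≤ s x) {lam : ℝ} (hlam : 1 ≤ lam) :
    vmodular μ s (fun x => w x / lam) ≤ vmodular μ s w * ENNReal.ofReal lam⁻¹ := by
  have hlam0 : 0 < lam := one_pos.trans_le hlam
  have hpointwise : ∀ x, ENNReal.ofReal (|w x / lam| ^ s x) ≤
      ENNReal.ofReal (|w x| ^ s x) * ENNReal.ofReal lam⁻¹ := by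
    intro x
    rw [← ENNReal.ofReal_mul (by positivity), abs_div, abs_of_pos hlam0,
      Real.div_rpow (abs_nonneg _) hlam0.le, div_eq_mul_inv]
    gcongr
    exact Real.self_le_rpow_of_one_le hlam (hs x)
  exact (lintegral_mono hpointwise).trans_eq (lintegral_mul_const' _ _ ENNReal.ofReal_ne_top)

lemma exists_vmodular_div_le_one (hs : ∀ x, 1 ≤ s x) (hfin : vmodular μ s w < ⊤) :
    ∃ lam : ℝ, 0 < lam ∧ vmodular μ s (fun x => w x / lam) ≤ 1 := by
  set lam := max 1 (vmodular μ s w).toReal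
  have hlam : 1 ≤ lam := le_max_left _ _
  refine ⟨lam, one_pos.trans_le hlam, (vmodular_div_le hs hlam).trans ?_⟩
  rw [← ENNReal.ofReal_toReal hfin.ne, ← ENNReal.ofReal_mul ENNReal.toReal_nonneg,
    ← ENNReal.ofReal_one]
  refine ENNReal.ofReal_le_ofReal ?_
  rw [← div_eq_mul_inv, div_le_one (one_pos.trans_le hlam)]
  exact le_max_right _ _

lemma lintegral_abs_mul_le_of_young (hp : Measurable p) (hu : Measurable u) {a b : ℝ}
    (ha : 0 ≤ a) (hb : 0 ≤ b)
    (hyoung : ∀ x y z, 0 ≤ y → 0 ≤ z → y * z ≤ a * y ^ p x + b * z ^ q x)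
    {lam m : ℝ} (hlam : 0 < lam) (hm : 0 < m)
    (hu1 : vmodular μ p (fun x => u x / lam) ≤ 1) (hv1 : vmodular μ q (fun x => v x / m) ≤ 1) :
    ∫⁻ x, ENNReal.ofReal |u x * v x| ∂μ ≤ ENNReal.ofReal ((a + b) * lam * m) := by
  have hpointwise : ∀ x, ENNReal.ofReal |u x * v x| ≤
      ENNReal.ofReal (lam * m * a) * ENNReal.ofReal (|u x / lam| ^ p x) +
        ENNReal.ofReal (lam * m * b) * ENNReal.ofReal (|v x / m| ^ q x) := by
    intro x
    have hsplit : |u x * v x| = lam * m * (|u x / lam| * |v x / m|) := by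
      rw [abs_mul, abs_div, abs_div, abs_of_pos hlam, abs_of_pos hm]
      field_simp
    rw [← ENNReal.ofReal_mul (by positivity), ← ENNReal.ofReal_mul (by positivity),
      ← ENNReal.ofReal_add (by positivity) (by positivity), hsplit]
    refine ENNReal.ofReal_le_ofReal ?_
    have hy := hyoung x _ _ (abs_nonneg (u x / lam)) (abs_nonneg (v x / m))
    calc lam * m * (|u x / lam| * |v x / m|)
        ≤ lam * m * (a * |u x / lam| ^ p x + b * |v x / m| ^ q x) := by gcongr
      _ = _ := by ring
  have hmeas : Measurable fun x =>
      ENNReal.ofReal (lam * m * a) * ENNReal.ofReal (|u x / lam| ^ p x) :=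
    ((hu.div_const lam).abs.pow hp).ennreal_ofReal.const_mul _
  calc ∫⁻ x, ENNReal.ofReal |u x * v x| ∂μ
      ≤ ENNReal.ofReal (lam * m * a) * vmodular μ p (fun x => u x / lam) +
          ENNReal.ofReal (lam * m * b) * vmodular μ q (fun x => v x / m) := by
        refine (lintegral_mono hpointwise).trans_eq ?_
        rw [lintegral_add_left hmeas, lintegral_const_mul' _ _ ENNReal.ofReal_ne_top,
          lintegral_const_mul' _ _ ENNReal.ofReal_ne_top]
        rfl
    _ ≤ ENNReal.ofReal (lam * m * a) + ENNReal.ofReal (lam * m * b) := by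
        gcongr <;> exact mul_le_of_le_one_right' ‹_›
    _ = ENNReal.ofReal ((a + b) * lam * m) := by
        rw [← ENNReal.ofReal_add (by positivity) (by positivity)]
        ring_nf

theorem lintegral_abs_mul_le_luxNorm_mul_luxNorm (hp : Measurable p) (hu : Measurable u)
    {a b : ℝ} (ha : 0 ≤ a) (hb : 0 ≤ b)
    (hyoung : ∀ x y z, 0 ≤ y → 0 ≤ z → y * z ≤ a * y ^ p x + b * z ^ q x)
    (hp1 : ∀ x, 1 ≤ p x) (hq1 : ∀ x, 1 ≤ q x)
    (hufin : vmodular μ p u < ⊤) (hvfin : vmodular μ q v < ⊤) :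
    ∫⁻ x, ENNReal.ofReal |u x * v x| ∂μ ≤
      ENNReal.ofReal ((a + b) * luxNorm μ p u * luxNorm μ q v) := by
  set S := {lam : ℝ | 0 < lam ∧ vmodular μ p (fun x => u x / lam) ≤ 1}
  set T := {m : ℝ | 0 < m ∧ vmodular μ q (fun x => v x / m) ≤ 1}
  obtain ⟨lam₀, hlam₀⟩ : S.Nonempty := exists_vmodular_div_le_one hp1 hufin
  obtain ⟨m₀, hm₀⟩ : T.Nonempty := exists_vmodular_div_le_one hq1 hvfin
  have hbound : ∀ lam ∈ S, ∀ m ∈ T,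
      ∫⁻ x, ENNReal.ofReal |u x * v x| ∂μ ≤ ENNReal.ofReal ((a + b) * lam * m) :=
    fun lam hlam m hm => lintegral_abs_mul_le_of_young hp hu ha hb hyoung hlam.1 hm.1 hlam.2 hm.2
  have hfin : ∫⁻ x, ENNReal.ofReal |u x * v x| ∂μ ≠ ⊤ :=
    ((hbound lam₀ hlam₀ m₀ hm₀).trans_lt ENNReal.ofReal_lt_top).ne
  have hS0 : 0 ≤ luxNorm μ p u := Real.sInf_nonneg fun lam hlam => hlam.1.le
  have hT0 : 0 ≤ luxNorm μ q v := Real.sInf_nonneg fun m hm => hm.1.le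
  rw [ENNReal.le_ofReal_iff_toReal_le hfin (by positivity)]
  refine Real.le_mul_csInf (by positivity) ⟨m₀, hm₀⟩ fun m hm => ?_
  have hm0 := hm.1
  rw [mul_right_comm]
  refine Real.le_mul_csInf (by positivity) ⟨lam₀, hlam₀⟩ fun lam hlam => ?_
  have hlam0 := hlam.1
  rw [mul_right_comm, ← ENNReal.le_ofReal_iff_toReal_le hfin (by positivity)]
  exact hbound lam hlam m hm

end Modular

theorem variable_exponent_holder_general
    {Ω : Type*} [MeasurableSpace Ω] (μ : Measure Ω)
    (r : Ω → ℝ) (rm rp : ℝ) (hr : Measurable r)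
    (hrm : 1 < rm) (hbound : ∀ x, rm ≤ r x ∧ r x ≤ rp)
    (u v : Ω → ℝ) (hu : Measurable u)
    (hufin : vmodular μ r u < ⊤)
    (hvfin : vmodular μ (fun x => r x / (r x - 1)) v < ⊤) :
    ∫⁻ x, ENNReal.ofReal |u x * v x| ∂μ ≤
      ENNReal.ofReal ((1 / rm + 1 / (rp / (rp - 1))) *
        luxNorm μ r u * luxNorm μ (fun x => r x / (r x - 1)) v) := by
  -- Without a point of `Ω`, nothing forces `1 < rp`.
  rcases isEmpty_or_nonempty Ω with _ | ⟨⟨x₀⟩⟩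
  · simp [Measure.eq_zero_of_isEmpty μ]
  have hr1 : ∀ x, 1 < r x := fun x => hrm.trans_le (hbound x).1
  have hrp := Real.HolderConjugate.conjExponent ((hr1 x₀).trans_le (hbound x₀).2)
  simp only [one_div]
  refine lintegral_abs_mul_le_luxNorm_mul_luxNorm hr hu (by positivity) hrp.symm.inv_nonneg
    (fun x y z hy hz => Real.young_inequality_of_exponent_mem_Icc hrm (hbound x) hy hz)
    (fun x => (hr1 x).le) (fun x => (Real.HolderConjugate.conjExponent (hr1 x)).symm.lt.le)
    hufin hvfin

theorem variable_exponent_holder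
    {Ω : Type*} [MeasurableSpace Ω] (μ : Measure Ω)
    (r : Ω → ℝ) (rm rp : ℝ) (hr : Measurable r)
    (hrm : 1 < rm) (hbound : ∀ x, rm ≤ r x ∧ r x ≤ rp)
    (u v : Ω → ℝ) (hu : Measurable u) (hv : Measurable v)
    (hufin : vmodular μ r u < ⊤)
    (hvfin : vmodular μ (fun x => r x / (r x - 1)) v < ⊤) :
    ∫⁻ x, ENNReal.ofReal |u x * v x| ∂μ ≤
      ENNReal.ofReal ((1 / rm + 1 / (rp / (rp - 1))) *
        luxNorm μ r u * luxNorm μ (fun x => r x / (r x - 1)) v) :=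
  variable_exponent_holder_general μ r rm rp hr hrm hbound u v hu hufin hvfin
end

section
/- Let p > 1 and 1 < ϑ ≤ p be real numbers and define f : ℝ → ℝ by f(s) = s^{p−1}·ln s + s^{ϑ−1} for s > 1 and f(s) = (max(s,0))^{ϑ−1} for s ≤ 1, and set F(s) = ∫₀^s f(t) dt. Then f fails the Ambrosetti–Rabinowitz condition: for every θ > p and every M > 0 there exists s ≥ M such that θ·F(s) > f(s)·s. -/
/-!
For `s ≥ 1` one has `F s = s ^ p * log s / p - s ^ p / p ^ 2 + 1 / p ^ 2 + s ^ ϑ / ϑ`, so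
`θ F(s) - f(s) s = (s ^ p / p ^ 2) (p (θ - p) log s - θ) + θ / p ^ 2 + (θ / ϑ - 1) s ^ ϑ`.
The logarithm makes the first term nonnegative once `log s ≥ θ / (p (θ - p))`, and the other two
terms are positive because `ϑ ≤ p < θ`.
-/

open Filter Topology intervalIntegral

noncomputable section

def logPerturbedPower (p ϑ s : ℝ) : ℝ :=
  if 1 < s then s ^ (p - 1) * Real.log s + s ^ (ϑ - 1) else (max s 0) ^ (ϑ - 1)

def logPerturbedPowerPrimitive (p ϑ t : ℝ) : ℝ :=
  t ^ p * Real.log t / p - t ^ p / p ^ 2 + t ^ ϑ / ϑ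

end

section

variable {p ϑ : ℝ}

lemma logPerturbedPower_of_mem_Icc {s : ℝ} (hs : s ∈ Set.Icc 0 1) :
    logPerturbedPower p ϑ s = s ^ (ϑ - 1) := by
  rw [logPerturbedPower, if_neg hs.2.not_gt, max_eq_left hs.1]

lemma logPerturbedPower_of_one_le {s : ℝ} (hs : 1 ≤ s) :
    logPerturbedPower p ϑ s = s ^ (p - 1) * Real.log s + s ^ (ϑ - 1) := by
  rcases hs.lt_or_eq with hs | rfl
  · rw [logPerturbedPower, if_pos hs]
  · simp [logPerturbedPower]

lemma logPerturbedPower_mul_self {s : ℝ} (hs : 1 ≤ s) :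
    logPerturbedPower p ϑ s * s = s ^ p * Real.log s + s ^ ϑ := by
  have hs0 : s ≠ 0 := by positivity
  rw [logPerturbedPower_of_one_le hs, Real.rpow_sub_one hs0, Real.rpow_sub_one hs0]
  field_simp

lemma continuousOn_logPerturbedPower_Ici :
    ContinuousOn (logPerturbedPower p ϑ) (Set.Ici 1) := by
  refine ContinuousOn.congr (fun t ht => ?_) fun t ht => logPerturbedPower_of_one_le ht
  have ht0 : t ≠ 0 := by simp only [Set.mem_Ici] at ht; positivity
  exact (((Real.continuousAt_rpow_const t (p - 1) (Or.inl ht0)).mul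
    (Real.continuousAt_log ht0)).add
    (Real.continuousAt_rpow_const t (ϑ - 1) (Or.inl ht0))).continuousWithinAt

lemma hasDerivAt_logPerturbedPowerPrimitive (hp : p ≠ 0) (hϑ : ϑ ≠ 0) {t : ℝ} (ht : 0 < t) :
    HasDerivAt (logPerturbedPowerPrimitive p ϑ)
      (t ^ (p - 1) * Real.log t + t ^ (ϑ - 1)) t := by
  have hpow := Real.hasDerivAt_rpow_const (p := p) (Or.inl ht.ne')
  have hlog := Real.hasDerivAt_log ht.ne'
  have hpowϑ := Real.hasDerivAt_rpow_const (p := ϑ) (Or.inl ht.ne')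
  refine ((((hpow.mul hlog).div_const p).sub (hpow.div_const (p ^ 2))).add
    (hpowϑ.div_const ϑ)).congr_deriv ?_
  rw [Real.rpow_sub_one ht.ne', Real.rpow_sub_one ht.ne']
  field_simp
  ring

lemma integral_logPerturbedPower_zero_one (hϑ : 0 < ϑ) :
    ∫ t in (0 : ℝ)..1, logPerturbedPower p ϑ t = 1 / ϑ := by
  rw [integral_congr fun t ht =>
      logPerturbedPower_of_mem_Icc (by rwa [Set.uIcc_of_le zero_le_one] at ht),
    integral_rpow (Or.inl (by linarith)), sub_add_cancel, Real.one_rpow, Real.zero_rpow hϑ.ne']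
  ring

lemma intervalIntegrable_logPerturbedPower_zero_one (hϑ : 0 < ϑ) :
    IntervalIntegrable (logPerturbedPower p ϑ) MeasureTheory.volume 0 1 :=
  (intervalIntegrable_rpow' (by linarith)).congr fun t ht =>
    (logPerturbedPower_of_mem_Icc (Set.Ioc_subset_Icc_self (by simpa using ht))).symm

lemma integral_logPerturbedPower (hp : p ≠ 0) (hϑ : 0 < ϑ) {s : ℝ} (hs : 1 ≤ s) :
    ∫ t in (0 : ℝ)..s, logPerturbedPower p ϑ t =
      logPerturbedPowerPrimitive p ϑ s + 1 / p ^ 2 := by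
  have hIcc : Set.uIcc 1 s ⊆ Set.Ici 1 := by
    rw [Set.uIcc_of_le hs]; exact Set.Icc_subset_Ici_self
  have hint : IntervalIntegrable (logPerturbedPower p ϑ) MeasureTheory.volume 1 s :=
    (continuousOn_logPerturbedPower_Ici.mono hIcc).intervalIntegrable
  have hderiv : ∀ t ∈ Set.uIcc 1 s,
      HasDerivAt (logPerturbedPowerPrimitive p ϑ) (logPerturbedPower p ϑ t) t := fun t ht => by
    rw [logPerturbedPower_of_one_le (hIcc ht)]
    exact hasDerivAt_logPerturbedPowerPrimitive hp hϑ.ne' (by linarith [(hIcc ht).out])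
  rw [← integral_add_adjacent_intervals (intervalIntegrable_logPerturbedPower_zero_one hϑ) hint,
    integral_logPerturbedPower_zero_one hϑ, integral_eq_sub_of_hasDerivAt hderiv hint,
    logPerturbedPowerPrimitive, logPerturbedPowerPrimitive]
  simp only [Real.one_rpow, Real.log_one]
  ring

lemma logPerturbedPower_mul_self_lt (hp : 0 < p) (hϑ : 0 < ϑ) {θ s : ℝ} (hθ : p < θ)
    (hϑθ : ϑ ≤ θ) (hs : 1 ≤ s) (hlog : θ / (p * (θ - p)) ≤ Real.log s) :
    logPerturbedPower p ϑ s * s < θ * (logPerturbedPowerPrimitive p ϑ s + 1 / p ^ 2) := by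
  have hθp : 0 < p * (θ - p) := mul_pos hp (by linarith)
  have hsp : 0 < s ^ p := by positivity
  have hsϑ : 0 < s ^ ϑ := by positivity
  have hlead : 0 ≤ s ^ p * (p * (θ - p) * Real.log s - θ) :=
    mul_nonneg hsp.le (by linarith [(div_le_iff₀' hθp).1 hlog])
  have hlower : s ^ ϑ ≤ θ / ϑ * s ^ ϑ :=
    le_mul_of_one_le_left hsϑ.le ((one_le_div hϑ).2 hϑθ)
  have hgap : θ * (logPerturbedPowerPrimitive p ϑ s + 1 / p ^ 2) - logPerturbedPower p ϑ s * s
      = s ^ p * (p * (θ - p) * Real.log s - θ) / p ^ 2 + θ / p ^ 2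
        + (θ / ϑ * s ^ ϑ - s ^ ϑ) := by
    rw [logPerturbedPower_mul_self hs, logPerturbedPowerPrimitive]
    field_simp
    ring
  have hconst : 0 < θ / p ^ 2 := div_pos (hp.trans hθ) (by positivity)
  linarith [div_nonneg hlead (sq_nonneg p)]

end

theorem fails_ambrosetti_rabinowitz_general
    (p ϑ : ℝ) (hϑ1 : 1 < ϑ) (hϑp : ϑ ≤ p)
    (f : ℝ → ℝ)
    (hf : ∀ s : ℝ, f s =
      if 1 < s then s ^ (p - 1) * Real.log s + s ^ (ϑ - 1)
      else (max s 0) ^ (ϑ - 1))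
    (F : ℝ → ℝ) (hF : ∀ s : ℝ, F s = ∫ t in (0:ℝ)..s, f t) :
    ∀ θ : ℝ, p < θ → ∀ M : ℝ, 0 < M → ∃ s : ℝ, M ≤ s ∧ θ * F s > f s * s := by
  obtain rfl : f = logPerturbedPower p ϑ := funext hf
  intro θ hθ M _
  have hp : 0 < p := by linarith
  set s := max M (Real.exp (θ / (p * (θ - p))))
  have hexp_le : Real.exp (θ / (p * (θ - p))) ≤ s := le_max_right _ _
  have hs : 1 ≤ s := (Real.one_le_exp
    (div_nonneg (by linarith) (mul_pos hp (by linarith)).le)).trans hexp_le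
  refine ⟨s, le_max_left _ _, ?_⟩
  rw [hF, integral_logPerturbedPower hp.ne' (by linarith) hs]
  exact logPerturbedPower_mul_self_lt hp (by linarith) hθ (by linarith) hs
    ((Real.le_log_iff_exp_le (by linarith)).2 hexp_le)

theorem fails_ambrosetti_rabinowitz
    (p ϑ : ℝ) (hp : 1 < p) (hϑ1 : 1 < ϑ) (hϑp : ϑ ≤ p)
    (f : ℝ → ℝ)
    (hf : ∀ s : ℝ, f s =
      if 1 < s then s ^ (p - 1) * Real.log s + s ^ (ϑ - 1)
      else (max s 0) ^ (ϑ - 1))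
    (F : ℝ → ℝ) (hF : ∀ s : ℝ, F s = ∫ t in (0:ℝ)..s, f t) :
    ∀ θ : ℝ, p < θ → ∀ M : ℝ, 0 < M → ∃ s : ℝ, M ≤ s ∧ θ * F s > f s * s :=
  fails_ambrosetti_rabinowitz_general p ϑ hϑ1 hϑp f hf F hF
end
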